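/- arXiv:2303.16729 — 2 statements merged into one kernel-verified Lean document; each statement's English description precedes it below -/
import Mathlib

section
/- Let k ≥ 3 and d ≥ 1 be integers and suppose there exists a binary self-orthogonal [g(k,d), k, d] Griesmer code. Then for every integer N with g(k,d) ≤ N ≤ g(k,d+2): (i) there exists a binary self-orthogonal [N,k] code with minimum distance d, and (ii) every binary self-orthogonal [N,k] code has minimum distance at most d. In other words, d_so(N,k) = d, where d_so(N,k) denotes the largest minimum distance among all binary self-orthogonal [N,k] codes. -/
/-!
Padding a self-orthogonal `[g(k,d), k, d]` code with zero coordinates gives such codes of every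
length `N ≥ g(k,d)`. Conversely, a self-orthogonal `[N, k, e]` code with `e > d` has even
`e ≥ d + 2`, so the Griesmer bound `g(k,e) ≤ N ≤ g(k,d+2)` forces `e = d + 2` and `N = g(k,d+2)`:
both `d` and `d + 2` are then minimum distances of self-orthogonal Griesmer codes. But such a code
with `k ≥ 2` has minimum distance divisible by `4`: the residual code of a minimum-weight word `x`
attains the Griesmer bound only with minimum distance `wt x / 2`, and a word of that weight lifts
to a codeword whose weight, and whose overlap with `x`, are even.
-/

open Finset

/-- Hamming weight of a binary vector. -/
def wt {ι : Type*} [Fintype ι] (x : ι → ZMod 2) : ℕ :=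
  (Finset.univ.filter fun i => x i ≠ 0).card

/-- A binary linear code is self-orthogonal if any two codewords are orthogonal. -/
def SelfOrthogonal {ι : Type*} [Fintype ι] (C : Submodule (ZMod 2) (ι → ZMod 2)) : Prop :=
  ∀ x ∈ C, ∀ y ∈ C, ∑ i, x i * y i = 0

/-- `C` has minimum distance exactly `d`: some nonzero codeword has weight `d`,
and every nonzero codeword has weight at least `d`. -/
def HasMinDist {ι : Type*} [Fintype ι] (C : Submodule (ZMod 2) (ι → ZMod 2)) (d : ℕ) : Prop :=
  (∃ x ∈ C, x ≠ 0 ∧ wt x = d) ∧ ∀ x ∈ C, x ≠ 0 → d ≤ wt x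

/-- The Griesmer function `g(k,d) = ∑_{i=0}^{k-1} ⌈d/2^i⌉` (ceiling division). -/
def griesmerBound (k d : ℕ) : ℕ :=
  ∑ i ∈ Finset.range k, (d + 2 ^ i - 1) / 2 ^ i

open Function Module

theorem griesmerBound_mono (k : ℕ) : Monotone (griesmerBound k) := fun _ _ h =>
  sum_le_sum fun _ _ => Nat.div_le_div_right (by omega)

theorem griesmerBound_strictMono {k : ℕ} (hk : 1 ≤ k) : StrictMono (griesmerBound k) :=
  fun _ _ h => sum_lt_sum (fun _ _ => Nat.div_le_div_right (by omega))
    ⟨0, mem_range.2 hk, by simpa using h⟩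

theorem add_two_pow_sub_one_div_two_pow {d : ℕ} (hd : 1 ≤ d) (i : ℕ) :
    (d + 2 ^ i - 1) / 2 ^ i = (d - 1) / 2 ^ i + 1 := by
  rw [Nat.sub_add_comm hd, Nat.add_div_right _ (by positivity)]

theorem griesmerBound_succ (k : ℕ) {d : ℕ} (hd : 1 ≤ d) :
    griesmerBound (k + 1) d = d + griesmerBound k ((d + 1) / 2) := by
  simp only [griesmerBound, add_two_pow_sub_one_div_two_pow hd,
    add_two_pow_sub_one_div_two_pow (by omega : 1 ≤ (d + 1) / 2), sum_range_succ', pow_succ',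
    ← Nat.div_div_eq_div_mul]
  rw [show (d + 1) / 2 - 1 = (d - 1) / 2 by omega, pow_zero, Nat.div_one]
  omega

section Weight

variable {ι : Type*} [Fintype ι]

theorem wt_eq_zero {x : ι → ZMod 2} : wt x = 0 ↔ x = 0 := hammingNorm_eq_zero

theorem wt_add_add_two_mul_card_inter (x y : ι → ZMod 2) :
    wt (x + y) + 2 * #{i | x i ≠ 0 ∧ y i ≠ 0} = wt x + wt y := by
  simp only [wt, card_filter, mul_sum, ← sum_add_distrib, Pi.add_apply]
  refine sum_congr rfl fun i _ => ?_
  generalize x i = a, y i = b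
  revert a b
  decide

theorem sum_mul_eq_card_inter (x y : ι → ZMod 2) :
    ∑ i, x i * y i = (#{i | x i ≠ 0 ∧ y i ≠ 0} : ZMod 2) := by
  rw [card_filter, Nat.cast_sum]
  refine sum_congr rfl fun i _ => ?_
  generalize x i = a, y i = b
  revert a b
  decide

theorem SelfOrthogonal.two_dvd_card_inter {C : Submodule (ZMod 2) (ι → ZMod 2)}
    (hC : SelfOrthogonal C) {x y : ι → ZMod 2} (hx : x ∈ C) (hy : y ∈ C) :
    2 ∣ #{i | x i ≠ 0 ∧ y i ≠ 0} :=
  (ZMod.natCast_eq_zero_iff _ 2).1 <| (sum_mul_eq_card_inter x y).symm.trans (hC x hx y hy)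

theorem SelfOrthogonal.two_dvd_wt {C : Submodule (ZMod 2) (ι → ZMod 2)}
    (hC : SelfOrthogonal C) {x : ι → ZMod 2} (hx : x ∈ C) : 2 ∣ wt x := by
  simpa [wt] using hC.two_dvd_card_inter hx hx

theorem SelfOrthogonal.two_dvd_of_hasMinDist {C : Submodule (ZMod 2) (ι → ZMod 2)}
    (hC : SelfOrthogonal C) {d : ℕ} (hd : HasMinDist C d) : 2 ∣ d := by
  obtain ⟨x, hx, -, rfl⟩ := hd.1
  exact hC.two_dvd_wt hx

def IsMinWeight (C : Submodule (ZMod 2) (ι → ZMod 2)) (x : ι → ZMod 2) : Prop :=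
  x ∈ C ∧ x ≠ 0 ∧ ∀ y ∈ C, y ≠ 0 → wt x ≤ wt y

theorem exists_isMinWeight {C : Submodule (ZMod 2) (ι → ZMod 2)} (hC : C ≠ ⊥) :
    ∃ x, IsMinWeight C x := by
  obtain ⟨x, ⟨hx, hx0⟩, hmin⟩ := Set.exists_min_image {y | y ∈ C ∧ y ≠ 0} wt
    (Set.toFinite _) (Submodule.exists_mem_ne_zero_of_ne_bot hC)
  exact ⟨x, hx, hx0, fun y hy hy0 => hmin y ⟨hy, hy0⟩⟩

end Weight

section Residual

variable {ι : Type*}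

/-- Puncturing at the support of `x`, realised on the same coordinates by setting them to zero. -/
def residualMap (x : ι → ZMod 2) : (ι → ZMod 2) →ₗ[ZMod 2] ι → ZMod 2 where
  toFun y i := if x i = 0 then y i else 0
  map_add' y z := by ext i; by_cases h : x i = 0 <;> simp [h]
  map_smul' a y := by ext i; by_cases h : x i = 0 <;> simp [h]

theorem residualMap_apply (x y : ι → ZMod 2) (i : ι) :
    residualMap x y i = if x i = 0 then y i else 0 := rfl

theorem residualMap_self (x : ι → ZMod 2) : residualMap x x = 0 := by
  ext i; by_cases h : x i = 0 <;> simp [residualMap_apply, h]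

variable [Fintype ι]

theorem wt_eq_card_inter_add_wt_residualMap (x y : ι → ZMod 2) :
    wt y = #{i | x i ≠ 0 ∧ y i ≠ 0} + wt (residualMap x y) := by
  simp only [wt, card_filter, ← sum_add_distrib]
  refine sum_congr rfl fun i _ => ?_
  rw [residualMap_apply]
  generalize x i = a, y i = b
  revert a b
  decide

variable {C : Submodule (ZMod 2) (ι → ZMod 2)} {x : ι → ZMod 2}

/-- Both `y` and `x + y` weigh at least `wt x`, and together they cover the support of `x` once
and the rest of the support of `y` twice. -/
theorem IsMinWeight.wt_le_two_mul_wt_residualMap (hx : IsMinWeight C x) {y : ι → ZMod 2}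
    (hy : y ∈ C) (hy0 : y ≠ 0) (hyx : y ≠ x) : wt x ≤ 2 * wt (residualMap x y) := by
  have hxy0 : x + y ≠ 0 := fun h => hyx <| by
    rw [eq_neg_of_add_eq_zero_right h]; ext i; exact ZMod.neg_eq_self_mod_two _
  have h₁ := hx.2.2 y hy hy0
  have h₂ := hx.2.2 _ (C.add_mem hx.1 hy) hxy0
  have := wt_add_add_two_mul_card_inter x y
  have := wt_eq_card_inter_add_wt_residualMap x y
  omega

theorem IsMinWeight.wt_le_two_mul_wt_of_mem_map (hx : IsMinWeight C x) {z : ι → ZMod 2}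
    (hz : z ∈ C.map (residualMap x)) (hz0 : z ≠ 0) : wt x ≤ 2 * wt z := by
  obtain ⟨y, hy, rfl⟩ := Submodule.mem_map.1 hz
  refine hx.wt_le_two_mul_wt_residualMap hy (fun h => hz0 ?_) (fun h => hz0 ?_)
  · rw [h, map_zero]
  · rw [h, residualMap_self]

theorem IsMinWeight.finrank_map_residualMap_add_one (hx : IsMinWeight C x) :
    finrank (ZMod 2) (C.map (residualMap x)) + 1 = finrank (ZMod 2) C := by
  have hker : LinearMap.ker ((residualMap x).domRestrict C) = (ZMod 2) ∙ ⟨x, hx.1⟩ := by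
    ext ⟨y, hy⟩
    simp only [LinearMap.mem_ker, LinearMap.domRestrict_apply, Submodule.mem_span_singleton,
      Subtype.ext_iff, SetLike.mk_smul_mk]
    constructor
    · intro h
      by_cases hy0 : y = 0
      · exact ⟨0, by simp [hy0]⟩
      by_cases hyx : y = x
      · exact ⟨1, by simp [hyx]⟩
      have := hx.wt_le_two_mul_wt_residualMap hy hy0 hyx
      rw [h, show wt (0 : ι → ZMod 2) = 0 from wt_eq_zero.2 rfl] at this
      exact absurd (wt_eq_zero.1 (by omega)) hx.2.1
    · rintro ⟨a, rfl⟩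
      rw [map_smul, residualMap_self, smul_zero]
  have := LinearMap.finrank_range_add_finrank_ker ((residualMap x).domRestrict C)
  rwa [LinearMap.range_domRestrict, hker,
    finrank_span_singleton (by simpa [Subtype.ext_iff] using hx.2.1)] at this

end Residual

section Griesmer

variable {ι : Type*} [Fintype ι]

/-- Induction on the dimension through the residual code of a minimum-weight word; `T` collects
the coordinates punctured so far, which lets the residual code stay in `ι → ZMod 2`. -/
theorem griesmerBound_add_card_le (k : ℕ) {C : Submodule (ZMod 2) (ι → ZMod 2)} {d : ℕ}
    {T : Finset ι} (hk : finrank (ZMod 2) C = k) (hd : ∀ y ∈ C, y ≠ 0 → d ≤ wt y)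
    (hT : ∀ y ∈ C, ∀ i ∈ T, y i = 0) : griesmerBound k d + #T ≤ Fintype.card ι := by
  classical
  induction k generalizing C d T with
  | zero => simpa [griesmerBound] using card_le_univ T
  | succ k ih =>
    obtain ⟨x, hx⟩ := exists_isMinWeight (C := C) fun h => by
      have := Submodule.finrank_eq_zero.2 h; omega
    have hw : 1 ≤ wt x := Nat.pos_of_ne_zero (wt_eq_zero.not.2 hx.2.1)
    have hST : Disjoint ({i | x i ≠ 0} : Finset ι) T :=
      disjoint_left.2 fun i hi hiT => (mem_filter.1 hi).2 (hT x hx.1 i hiT)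
    have hres := ih (C := C.map (residualMap x)) (d := (wt x + 1) / 2)
      (T := ({i | x i ≠ 0} : Finset ι) ∪ T) (by have := hx.finrank_map_residualMap_add_one; omega)
      (fun z hz hz0 => by have := hx.wt_le_two_mul_wt_of_mem_map hz hz0; omega)
      (fun z hz i hi => by
        obtain ⟨y, hy, rfl⟩ := Submodule.mem_map.1 hz
        rcases mem_union.1 hi with hi | hi
        · simp [residualMap_apply, (mem_filter.1 hi).2]
        · simp [residualMap_apply, hT y hy i hi])
    calc griesmerBound (k + 1) d + #T ≤ griesmerBound (k + 1) (wt x) + #T := by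
          gcongr; exact griesmerBound_mono _ (hd x hx.1 hx.2.1)
      _ = griesmerBound k ((wt x + 1) / 2) + #(({i | x i ≠ 0} : Finset ι) ∪ T) := by
          rw [griesmerBound_succ _ hw, card_union_of_disjoint hST, wt]; ring
      _ ≤ Fintype.card ι := hres

theorem griesmerBound_le_card {k : ℕ} {C : Submodule (ZMod 2) (ι → ZMod 2)} {d : ℕ}
    (hk : finrank (ZMod 2) C = k) (hd : HasMinDist C d) : griesmerBound k d ≤ Fintype.card ι := by
  simpa using griesmerBound_add_card_le k (T := ∅) hk hd.2 (by simp)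

end Griesmer

theorem SelfOrthogonal.four_dvd_of_card_eq_griesmerBound {ι : Type*} [Fintype ι]
    {C : Submodule (ZMod 2) (ι → ZMod 2)} (hC : SelfOrthogonal C) {k D : ℕ} (hk : 2 ≤ k)
    (hfr : finrank (ZMod 2) C = k) (hmd : HasMinDist C D)
    (hn : Fintype.card ι = griesmerBound k D) : 4 ∣ D := by
  obtain ⟨k, rfl⟩ : ∃ k', k = k' + 1 := ⟨k - 1, by omega⟩
  obtain ⟨x, hxC, hx0, rfl⟩ := hmd.1
  have hx : IsMinWeight C x := ⟨hxC, hx0, hmd.2⟩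
  have hfr' : finrank (ZMod 2) (C.map (residualMap x)) = k := by
    have := hx.finrank_map_residualMap_add_one; omega
  obtain ⟨z, hz, hz0, hzmin⟩ := exists_isMinWeight (C := C.map (residualMap x)) fun h => by
    have := Submodule.finrank_eq_zero.2 h; omega
  have hgz := griesmerBound_add_card_le k (T := {i | x i ≠ 0}) hfr' hzmin fun z' hz' i hi => by
    obtain ⟨y, -, rfl⟩ := Submodule.mem_map.1 hz'
    simp [residualMap_apply, (mem_filter.1 hi).2]
  rw [hn, griesmerBound_succ _ (Nat.pos_of_ne_zero (wt_eq_zero.not.2 hx0))] at hgz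
  change _ + wt x ≤ _ at hgz
  have hz_le : wt z ≤ (wt x + 1) / 2 :=
    (griesmerBound_strictMono (k := k) (by omega)).le_iff_le.1 (by omega)
  have hz_ge := hx.wt_le_two_mul_wt_of_mem_map hz hz0
  obtain ⟨y, hy, rfl⟩ := Submodule.mem_map.1 hz
  have := wt_eq_card_inter_add_wt_residualMap x y
  have := hC.two_dvd_wt hy
  have := hC.two_dvd_wt hxC
  have := hC.two_dvd_card_inter hxC hy
  omega

section ExtendByZero

variable {ι κ : Type*} [Fintype ι] [Fintype κ] {e : ι → κ}

theorem wt_extend_zero (he : Injective e) (x : ι → ZMod 2) : wt (extend e x 0) = wt x := by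
  simp only [wt, card_filter]
  refine (Fintype.sum_of_injective e he _ _ (fun j hj => ?_) fun i => ?_).symm
  · simp [extend_apply' _ _ _ hj]
  · simp [he.extend_apply]

theorem sum_extend_zero_mul (he : Injective e) (x y : ι → ZMod 2) :
    ∑ j, extend e x 0 j * extend e y 0 j = ∑ i, x i * y i :=
  (Fintype.sum_of_injective e he _ _ (fun j hj => by simp [extend_apply' _ _ _ hj])
    fun i => by simp [he.extend_apply]).symm

theorem SelfOrthogonal.map_extendByZero (he : Injective e)
    {C : Submodule (ZMod 2) (ι → ZMod 2)} (hC : SelfOrthogonal C) :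
    SelfOrthogonal (C.map (ExtendByZero.linearMap (ZMod 2) e)) := by
  rintro _ ⟨x, hx, rfl⟩ _ ⟨y, hy, rfl⟩
  exact (sum_extend_zero_mul he x y).trans (hC x hx y hy)

theorem HasMinDist.map_extendByZero (he : Injective e)
    {C : Submodule (ZMod 2) (ι → ZMod 2)} {d : ℕ} (hC : HasMinDist C d) :
    HasMinDist (C.map (ExtendByZero.linearMap (ZMod 2) e)) d := by
  have hinj : Injective (ExtendByZero.linearMap (ZMod 2) e) :=
    extend_injective he (0 : κ → ZMod 2)
  obtain ⟨x, hx, hx0, hwx⟩ := hC.1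
  refine ⟨⟨_, Submodule.mem_map_of_mem hx, fun h => hx0 ((map_eq_zero_iff _ hinj).1 h), ?_⟩, ?_⟩
  · exact (wt_extend_zero he x).trans hwx
  · rintro _ ⟨y, hy, rfl⟩ hy0
    exact (wt_extend_zero he y).symm ▸ hC.2 y hy fun h => hy0 (by rw [h, map_zero])

end ExtendByZero

theorem stmt6_general (k d : ℕ) (hk : 3 ≤ k)
    (hex : ∃ C : Submodule (ZMod 2) (Fin (griesmerBound k d) → ZMod 2),
      Module.finrank (ZMod 2) C = k ∧ SelfOrthogonal C ∧ HasMinDist C d) :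
    ∀ N : ℕ, griesmerBound k d ≤ N → N ≤ griesmerBound k (d + 2) →
      (∃ C : Submodule (ZMod 2) (Fin N → ZMod 2),
        Module.finrank (ZMod 2) C = k ∧ SelfOrthogonal C ∧ HasMinDist C d) ∧
      (∀ C : Submodule (ZMod 2) (Fin N → ZMod 2),
        Module.finrank (ZMod 2) C = k → SelfOrthogonal C →
        ∀ e : ℕ, HasMinDist C e → e ≤ d) := by
  intro N hN₁ hN₂
  obtain ⟨C₀, hfr₀, hso₀, hmd₀⟩ := hex
  have hinj := Fin.castLE_injective hN₁
  refine ⟨⟨_, ?_, hso₀.map_extendByZero hinj, hmd₀.map_extendByZero hinj⟩, ?_⟩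
  · exact (Submodule.equivMapOfInjective _ (extend_injective hinj 0) C₀).finrank_eq.symm.trans hfr₀
  intro C hfr hso e hmd
  by_contra! hde
  have hd₂ := hso₀.two_dvd_of_hasMinDist hmd₀
  have he₂ := hso.two_dvd_of_hasMinDist hmd
  have hgN : griesmerBound k e ≤ N := by simpa using griesmerBound_le_card hfr hmd
  have hed : e = d + 2 := le_antisymm
    ((griesmerBound_strictMono (k := k) (by omega)).le_iff_le.1 (hgN.trans hN₂)) (by omega)
  subst hed
  have hd₄ := hso₀.four_dvd_of_card_eq_griesmerBound (by omega) hfr₀ hmd₀ (Fintype.card_fin _)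
  have he₄ := hso.four_dvd_of_card_eq_griesmerBound (by omega) hfr hmd
    ((Fintype.card_fin N).trans (by omega))
  omega

theorem stmt6 (k d : ℕ) (hk : 3 ≤ k) (hd : 1 ≤ d)
    (hex : ∃ C : Submodule (ZMod 2) (Fin (griesmerBound k d) → ZMod 2),
      Module.finrank (ZMod 2) C = k ∧ SelfOrthogonal C ∧ HasMinDist C d) :
    ∀ N : ℕ, griesmerBound k d ≤ N → N ≤ griesmerBound k (d + 2) →
      (∃ C : Submodule (ZMod 2) (Fin N → ZMod 2),
        Module.finrank (ZMod 2) C = k ∧ SelfOrthogonal C ∧ HasMinDist C d) ∧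
      (∀ C : Submodule (ZMod 2) (Fin N → ZMod 2),
        Module.finrank (ZMod 2) C = k → SelfOrthogonal C →
        ∀ e : ℕ, HasMinDist C e → e ≤ d) :=
  stmt6_general k d hk hex
end

section
/- There is no binary self-orthogonal [125,7,62] code and there is no binary self-orthogonal [62,7,30] code; that is, no 7-dimensional self-orthogonal subspace of F_2^125 has minimum distance 62, and no 7-dimensional self-orthogonal subspace of F_2^62 has minimum distance 30. -/
/-!
In a self-orthogonal binary code every weight is even and `wt (x + y) ≡ wt x + wt y (mod 4)`,
since `wt (x + y) = wt x + wt y - 2 wt (x * y)` and `wt (x * y) ≡ ⟪x, y⟫ = 0 (mod 2)`. Hence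
`x ↦ wt x / 2 (mod 2)` is additive on `C`; when the minimum distance `d` is `≡ 2 (mod 4)` it is onto,
so its kernel, the doubly-even subcode, is half of `C`, and its nonzero words have weight `≥ d + 2`.
On any group of codewords a coordinate is nonzero on at most half of them, so the total weight of the
doubly-even subcode is at most `n |C| / 4`. Together, `2 (|C| - 2) (d + 2) ≤ n |C|`, which fails
for `|C| = 2 ^ 7` and `(n, d) = (125, 62)` or `(62, 30)`.
-/

open Finset

theorem pi_zmod_two_mul_self {ι : Type*} (x : ι → ZMod 2) : x * x = x :=
  funext fun i => by
    show x i * x i = x i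
    generalize x i = a
    revert a; decide

section Weight

variable {ι : Type*} [Fintype ι]

theorem wt_eq_sum_ite (x : ι → ZMod 2) : wt x = ∑ i, if x i ≠ 0 then 1 else 0 :=
  card_filter _ _

theorem wt_add_add_two_mul_wt_mul (x y : ι → ZMod 2) :
    wt (x + y) + 2 * wt (x * y) = wt x + wt y := by
  simp only [wt_eq_sum_ite, mul_sum, ← sum_add_distrib]
  refine sum_congr rfl fun i _ => ?_
  have key : ∀ a b : ZMod 2, ((if a + b ≠ 0 then 1 else 0) + 2 * if a * b ≠ 0 then 1 else 0) =
      (if a ≠ 0 then 1 else 0) + if b ≠ 0 then 1 else 0 := by decide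
  exact key (x i) (y i)

theorem natCast_wt (x : ι → ZMod 2) : (wt x : ZMod 2) = ∑ i, x i := by
  rw [wt_eq_sum_ite]
  push_cast
  refine sum_congr rfl fun i _ => ?_
  generalize x i = a
  revert a; decide

end Weight

namespace AddMonoidHom

variable {G : Type*} [AddGroup G]

theorem two_mul_card_ker {ψ : G →+ ZMod 2} {g₀ : G} (hg₀ : ψ g₀ = 1) :
    2 * Nat.card ψ.ker = Nat.card G := by
  have hsurj : Function.Surjective ψ := fun c => by
    fin_cases c
    · exact ⟨0, map_zero ψ⟩
    · exact ⟨g₀, hg₀⟩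
  rw [← ψ.ker.card_mul_index, AddSubgroup.index_ker, ψ.range_eq_top.mpr hsurj]
  simp [mul_comm]

theorem two_mul_card_filter_ne_zero_le [Fintype G] (ψ : G →+ ZMod 2) :
    2 * #{g | ψ g ≠ 0} ≤ Fintype.card G := by
  by_cases h : ∃ g₀, ψ g₀ ≠ 0
  · obtain ⟨g₀, hg₀⟩ := h
    have hker := two_mul_card_ker (ψ := ψ) (Fin.eq_one_of_ne_zero _ hg₀)
    have hsplit := card_filter_add_card_filter_not (s := univ) fun g => ψ g ≠ 0
    have hker_eq : Nat.card ψ.ker = #{g | ¬ψ g ≠ 0} := by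
      simp [Nat.card_eq_fintype_card, Fintype.card_subtype]
    rw [Nat.card_eq_fintype_card (α := G)] at hker
    rw [card_univ] at hsplit
    omega
  · push Not at h
    simp [h]

end AddMonoidHom

theorem two_mul_sum_wt_le {G ι : Type*} [AddGroup G] [Fintype G] [Fintype ι]
    (f : G →+ (ι → ZMod 2)) :
    2 * ∑ g, wt (f g) ≤ Fintype.card ι * Fintype.card G := by
  have hswap : ∑ g, wt (f g) = ∑ i, #{g | f g i ≠ 0} := by
    simp only [wt_eq_sum_ite, card_filter]
    exact sum_comm
  calc 2 * ∑ g, wt (f g) = ∑ i, 2 * #{g | (Pi.evalAddMonoidHom _ i).comp f g ≠ 0} := by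
        rw [hswap, mul_sum]; rfl
    _ ≤ ∑ _i : ι, Fintype.card G := sum_le_sum fun i _ =>
        AddMonoidHom.two_mul_card_filter_ne_zero_le _
    _ = Fintype.card ι * Fintype.card G := by simp

theorem card_sub_one_mul_le_sum {G : Type*} [Zero G] [Fintype G] [DecidableEq G] {w : G → ℕ} {m : ℕ}
    (hw : ∀ g, g ≠ 0 → m ≤ w g) : (Fintype.card G - 1) * m ≤ ∑ g, w g := by
  calc (Fintype.card G - 1) * m = #(univ.erase 0) • m := by
        rw [card_erase_of_mem (mem_univ _), card_univ, smul_eq_mul]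
    _ ≤ ∑ g ∈ univ.erase 0, w g := card_nsmul_le_sum _ _ _ fun g hg => hw g (ne_of_mem_erase hg)
    _ ≤ ∑ g, w g := sum_le_sum_of_subset (erase_subset _ _)

namespace SelfOrthogonal

variable {ι : Type*} [Fintype ι] {C : Submodule (ZMod 2) (ι → ZMod 2)}

theorem two_dvd_wt_mul (hC : SelfOrthogonal C) {x y : ι → ZMod 2} (hx : x ∈ C) (hy : y ∈ C) :
    2 ∣ wt (x * y) := by
  rw [← ZMod.natCast_eq_zero_iff, natCast_wt]
  exact hC x hx y hy

theorem two_dvd_wt_s12 (hC : SelfOrthogonal C) {x : ι → ZMod 2} (hx : x ∈ C) : 2 ∣ wt x := by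
  simpa only [pi_zmod_two_mul_self] using hC.two_dvd_wt_mul hx hx

def halfWt (hC : SelfOrthogonal C) : C →+ ZMod 2 where
  toFun x := ((wt (x : ι → ZMod 2) / 2 : ℕ) : ZMod 2)
  map_zero' := by simp [wt]
  map_add' x y := by
    have hxy := wt_add_add_two_mul_wt_mul (x : ι → ZMod 2) y
    have := hC.two_dvd_wt_s12 x.2
    have := hC.two_dvd_wt_s12 y.2
    have := hC.two_dvd_wt_mul x.2 y.2
    rw [Submodule.coe_add, ← Nat.cast_add, ZMod.natCast_eq_natCast_iff']
    omega

theorem two_mul_card_sub_two_mul_le (hC : SelfOrthogonal C) {d : ℕ} (hd : HasMinDist C d)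
    (hd₄ : d % 4 = 2) :
    2 * (Nat.card C - 2) * (d + 2) ≤ Fintype.card ι * Nat.card C := by
  classical
  obtain ⟨⟨x₀, hx₀C, -, hx₀⟩, hmin⟩ := hd
  have hφx₀ : hC.halfWt ⟨x₀, hx₀C⟩ = 1 := by
    show ((wt x₀ / 2 : ℕ) : ZMod 2) = ((1 : ℕ) : ZMod 2)
    rw [ZMod.natCast_eq_natCast_iff']
    omega
  have hK := AddMonoidHom.two_mul_card_ker hφx₀
  let f : hC.halfWt.ker →+ (ι → ZMod 2) := C.subtype.toAddMonoidHom.comp hC.halfWt.ker.subtype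
  have hwt : ∀ g : hC.halfWt.ker, g ≠ 0 → d + 2 ≤ wt (f g) := by
    intro g hg
    have hfg : f g ≠ 0 := by simpa [f] using hg
    have hfgC : f g ∈ C := g.1.2
    have h₂ := hC.two_dvd_wt_s12 hfgC
    have h₄ : 2 ∣ wt (f g) / 2 := (ZMod.natCast_eq_zero_iff _ _).mp g.2
    have := hmin _ hfgC hfg
    omega
  have hlow := card_sub_one_mul_le_sum hwt
  have hup := two_mul_sum_wt_le f
  rw [Nat.card_eq_fintype_card] at hK
  set M := Fintype.card hC.halfWt.ker
  rw [← hK]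
  calc 2 * (2 * M - 2) * (d + 2) = 4 * ((M - 1) * (d + 2)) := by
        rw [show 2 * M - 2 = 2 * (M - 1) by omega]
        ring
    _ ≤ 2 * (2 * ∑ g, wt (f g)) := by omega
    _ ≤ 2 * (Fintype.card ι * M) := Nat.mul_le_mul_left 2 hup
    _ = Fintype.card ι * (2 * M) := by ring

end SelfOrthogonal

theorem stmt12 :
    (¬ ∃ C : Submodule (ZMod 2) (Fin 125 → ZMod 2),
      Module.finrank (ZMod 2) C = 7 ∧ SelfOrthogonal C ∧ HasMinDist C 62) ∧
    (¬ ∃ C : Submodule (ZMod 2) (Fin 62 → ZMod 2),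
      Module.finrank (ZMod 2) C = 7 ∧ SelfOrthogonal C ∧ HasMinDist C 30) := by
  have card_eq {n : ℕ} {C : Submodule (ZMod 2) (Fin n → ZMod 2)}
      (h : Module.finrank (ZMod 2) C = 7) : Nat.card C = 2 ^ 7 := by
    rw [Module.natCard_eq_pow_finrank (K := ZMod 2), h, Nat.card_zmod]
  constructor <;> rintro ⟨C, hrank, hC, hd⟩ <;>
  · have := hC.two_mul_card_sub_two_mul_le hd (by norm_num)
    rw [card_eq hrank, Fintype.card_fin] at this
    omega
end
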